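/- For a subgroup H of Aff(F_q) of type (d, k), the multiplicity ⟨ρ_H, θ⟩ of the degree-(q−1) irreducible character θ in the permutation character ρ_H = Ind_H^G(1) equals (p^{n−k} − 1)/d. -/

import Mathlib

/-!
`H` is parametrised by `(a, b) ∈ μ_d × V` through `x ↦ a * x + b`; since `Fˣ` is cyclic and
`d ∣ q - 1`, `|μ_d| = d`, so `|H| = d p^k`. A map `x ↦ a * x + b` with `a ≠ 1` has exactly
one fixed point, so `θ` vanishes on it, while the translation by `b` fixes all of `F` or
nothing. Hence `∑_{h ∈ H} θ(h) = (q - 1) - (p^k - 1) = q - p^k`, and dividing by `d p^k`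
gives the claim.
-/

variable {F : Type*} [Field F]

/-- The affine permutation `x ↦ a * x + b` of a field `F`. -/
def affinePerm (a : Fˣ) (b : F) : Equiv.Perm F :=
  (Equiv.mulLeft₀ (a : F) a.ne_zero).trans (Equiv.addRight b)

@[simp] lemma affinePerm_apply (a : Fˣ) (b x : F) : affinePerm a b x = a * x + b := rfl

/-- The one-dimensional affine group over `F`, as a subgroup of the permutation group. -/
def Aff (F : Type*) [Field F] : Subgroup (Equiv.Perm F) where
  carrier := {g | ∃ (a : Fˣ) (b : F), g = affinePerm a b}
  one_mem' := ⟨1, 0, by ext x; simp⟩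
  mul_mem' := by
    rintro f g ⟨a, b, rfl⟩ ⟨c, d, rfl⟩
    exact ⟨a * c, a * d + b, by ext x; simp [mul_add, mul_assoc, add_assoc]⟩
  inv_mem' := by
    rintro f ⟨a, b, rfl⟩
    refine ⟨a⁻¹, -(((a⁻¹ : Fˣ) : F) * b), inv_eq_iff_mul_eq_one.mpr ?_⟩
    ext x
    simp [mul_add, mul_assoc]

/-- The subgroup `V ⋊ Λ_d` of `Aff F`, as a set of permutations. -/
def affSub {F : Type*} [Field F] (V : AddSubgroup F) (d : ℕ) : Set (Equiv.Perm F) :=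
  {h : Equiv.Perm F | ∃ (a : Fˣ) (b : F), h = affinePerm a b ∧ a ^ d = 1 ∧ b ∈ V}

section AffinePerm

lemma affinePerm_inj {a a' : Fˣ} {b b' : F} :
    affinePerm a b = affinePerm a' b' ↔ a = a' ∧ b = b' := by
  refine ⟨fun h => ?_, fun ⟨ha, hb⟩ => ha ▸ hb ▸ rfl⟩
  have h0 := congrArg (· 0) h
  have h1 := congrArg (· 1) h
  simp only [affinePerm_apply, mul_zero, zero_add, mul_one] at h0 h1
  exact ⟨Units.ext (by rw [h0] at h1; exact add_right_cancel h1), h0⟩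

lemma affinePerm_apply_eq_self_iff_of_ne_one {a : Fˣ} (ha : a ≠ 1) (b x : F) :
    affinePerm a b x = x ↔ x = (1 - (a : F))⁻¹ * b := by
  have ha' : (1 : F) - a ≠ 0 := sub_ne_zero.mpr fun h => ha (Units.ext h.symm)
  rw [affinePerm_apply, eq_inv_mul_iff_mul_eq₀ ha']
  constructor <;> intro h <;> linear_combination -h

variable [Fintype F] [DecidableEq F]

lemma card_fixedPoints_affinePerm_of_ne_one {a : Fˣ} (ha : a ≠ 1) (b : F) :
    Fintype.card {x : F // affinePerm a b x = x} = 1 := by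
  rw [Fintype.card_congr (Equiv.subtypeEquivRight (affinePerm_apply_eq_self_iff_of_ne_one ha b))]
  exact Fintype.card_subtype_eq _

lemma card_fixedPoints_affinePerm_one (b : F) :
    Fintype.card {x : F // affinePerm 1 b x = x} = if b = 0 then Fintype.card F else 0 := by
  by_cases hb : b = 0 <;> simp [hb]

end AffinePerm

lemma card_rootsOfUnity_of_dvd_card_sub_one {F : Type*} [Field F] [Finite F] {d : ℕ}
    [NeZero d] (hd : d ∣ Nat.card F - 1) : Nat.card (rootsOfUnity d F) = d := by
  have hm : 0 < Nat.card F - 1 := Nat.sub_pos_of_lt Finite.one_lt_card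
  obtain ⟨g, hg⟩ := IsCyclic.exists_ofOrder_eq_natCard (α := Fˣ)
  have hgen : IsPrimitiveRoot g (Nat.card F - 1) := Nat.card_units F ▸ hg ▸ .orderOf g
  have hζ := hgen.pow_of_dvd (Nat.div_pos (Nat.le_of_dvd hm hd) (NeZero.pos d)).ne'
    (Nat.div_dvd_of_dvd hd)
  rw [Nat.div_div_self hd hm.ne'] at hζ
  exact hζ.card_rootsOfUnity'

section AffSub

variable (V : AddSubgroup F) (d : ℕ)

noncomputable def affSubEquiv : rootsOfUnity d F × V ≃ affSub V d :=
  Equiv.ofBijective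
    (fun z => ⟨affinePerm z.1 z.2, z.1, z.2, rfl, (mem_rootsOfUnity d _).mp z.1.2, z.2.2⟩)
    ⟨fun _ _ h => by
      obtain ⟨ha, hb⟩ := affinePerm_inj.mp (congrArg Subtype.val h)
      exact Prod.ext (Subtype.ext ha) (Subtype.ext hb),
     by
      rintro ⟨_, a, b, rfl, ha, hb⟩
      exact ⟨(⟨a, (mem_rootsOfUnity d a).mpr ha⟩, ⟨b, hb⟩), rfl⟩⟩

@[simp] lemma coe_affSubEquiv_apply (z : rootsOfUnity d F × V) :
    (affSubEquiv V d z : Equiv.Perm F) = affinePerm (z.1 : Fˣ) (z.2 : F) := rfl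

lemma natCard_affSub : Nat.card (affSub V d) = Nat.card (rootsOfUnity d F) * Nat.card V := by
  rw [← Nat.card_prod, Nat.card_congr (affSubEquiv V d)]

variable [Fintype F] [DecidableEq F]

lemma sum_affSub_card_fixedPoints_sub_one :
    ∑ g ∈ (Set.toFinite (affSub V d)).toFinset, ((Fintype.card {x : F // g x = x} : ℚ) - 1) =
      Fintype.card F - Nat.card V := by
  classical
  rw [Finset.sum_subtype _ (fun g => Set.Finite.mem_toFinset _),
    ← (affSubEquiv V d).sum_comp, Fintype.sum_prod_type, Fintype.sum_eq_single 1]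
  · have hterm (b : V) :
        ((Fintype.card {x : F // (affSubEquiv V d (1, b) : Equiv.Perm F) x = x} : ℚ) - 1) =
          (if b = 0 then (Fintype.card F : ℚ) else 0) - 1 := by
      rw [coe_affSubEquiv_apply, OneMemClass.coe_one, card_fixedPoints_affinePerm_one]
      simp
    rw [Finset.sum_congr rfl fun b _ => hterm b]
    simp [Finset.sum_sub_distrib, Nat.card_eq_fintype_card]
  · intro a ha
    refine Finset.sum_eq_zero fun b _ => ?_
    rw [coe_affSubEquiv_apply, card_fixedPoints_affinePerm_of_ne_one (by simpa using ha)]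
    simp

end AffSub

open Finset in
theorem multiplicity_theta_general (p n : ℕ) (hp : p.Prime)
    (F : Type*) [Field F] [Fintype F] [DecidableEq F] (hF : Fintype.card F = p ^ n)
    (d k : ℕ) (hd : d ∣ Fintype.card F - 1) (hd0 : 0 < d)
    (V : AddSubgroup F) (hVcard : Nat.card V = p ^ k) :
    (Nat.card (affSub V d) : ℚ)⁻¹ *
      ∑ g ∈ (Set.toFinite (affSub V d)).toFinset,
        ((Fintype.card {x : F // g x = x} : ℚ) - 1) =
    ((p : ℚ) ^ (n - k) - 1) / d := by
  have : NeZero d := ⟨hd0.ne'⟩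
  have hkn : k ≤ n := by
    rw [← Nat.pow_le_pow_iff_right hp.one_lt, ← hVcard, ← hF, ← Nat.card_eq_fintype_card]
    exact Finite.card_subtype_le _
  rw [sum_affSub_card_fixedPoints_sub_one, natCard_affSub,
    card_rootsOfUnity_of_dvd_card_sub_one (Nat.card_eq_fintype_card (α := F) ▸ hd), hVcard, hF,
    ← pow_sub_mul_pow p hkn]
  have hpk : (p : ℚ) ^ k ≠ 0 := pow_ne_zero _ (Nat.cast_ne_zero.mpr hp.ne_zero)
  push_cast
  field_simp

open Finset in
/-- For a subgroup `H = V ⋊ Λ_d` of type `(d, k)` of `Aff F`, the multiplicity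
`⟨ρ_H, θ⟩ = (1/|H|) ∑_{h ∈ H} θ(h)` of the degree-`(q-1)` irreducible character
`θ(g) = |Fix(g)| - 1` in the permutation character `ρ_H = Ind_H^G 1` equals
`(p^(n-k) - 1)/d`. -/
theorem multiplicity_theta (p n : ℕ) (hp : p.Prime) (hn : 0 < n)
    (F : Type*) [Field F] [Fintype F] [DecidableEq F] (hF : Fintype.card F = p ^ n)
    (d k : ℕ) (hd : d ∣ Fintype.card F - 1) (hd0 : 0 < d)
    (V : AddSubgroup F) (hVcard : Nat.card V = p ^ k)
    (hV : ∀ a : Fˣ, a ^ d = 1 → ∀ x ∈ V, (a : F) * x ∈ V) :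
    (Nat.card (affSub V d) : ℚ)⁻¹ *
      ∑ g ∈ (Set.toFinite (affSub V d)).toFinset,
        ((Fintype.card {x : F // g x = x} : ℚ) - 1) =
    ((p : ℚ) ^ (n - k) - 1) / d :=
  multiplicity_theta_general p n hp F hF d k hd hd0 V hVcard
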